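/- Let K = ℚ(n,c) be the field of rational functions in two independent variables n and c over ℚ (the fraction field of the polynomial ring ℚ[n,c]). Then the polynomial P_{n,c,5}(X) = X⁵ − nX⁴ + (c³ + 2nc − c² − c)X³ − (c³ + nc² − 3c²)X² + (c⁴ − 3c³)X + c⁴ is irreducible over K. -/
import Mathlib

/-- The field `K = ℚ(n,c)` of rational functions in two independent variables
over `ℚ`: the fraction field of the polynomial ring `ℚ[n,c]`. -/
abbrev K : Type := FractionRing (MvPolynomial (Fin 2) ℚ)

/-- The variable `n` viewed in `K = ℚ(n,c)`. -/
noncomputable def n : K := algebraMap (MvPolynomial (Fin 2) ℚ) K (MvPolynomial.X 0)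

/-- The variable `c` viewed in `K = ℚ(n,c)`. -/
noncomputable def c : K := algebraMap (MvPolynomial (Fin 2) ℚ) K (MvPolynomial.X 1)

open Polynomial in
/-- The quintic `P_{n,c,5}` as a polynomial over `K = ℚ(n,c)`. -/
noncomputable def P₅ : Polynomial K :=
  X ^ 5 - C n * X ^ 4 + C (c ^ 3 + 2 * n * c - c ^ 2 - c) * X ^ 3
    - C (c ^ 3 + n * c ^ 2 - 3 * c ^ 2) * X ^ 2 + C (c ^ 4 - 3 * c ^ 3) * X
    + C (c ^ 4)
open Polynomial

noncomputable def g2 : (ZMod 2)[X] := X^5 + X^3 + 1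

lemma g2_monic : g2.Monic := by unfold g2; monicity!

lemma g2_natDegree : g2.natDegree = 5 := by unfold g2; compute_degree!

lemma two_eq_zero : (2 : (ZMod 2)[X]) = 0 := by
  have h : (2 : (ZMod 2)[X]) = C (2 : ZMod 2) := (map_ofNat C 2).symm
  rw [h, show (2 : ZMod 2) = 0 from rfl, map_zero]

lemma g2_div : g2 = (X^2+X+1) * (X^3+X^2+X) + (X+1) := by
  unfold g2
  linear_combination (-X^4-X^3-X^2-X : (ZMod 2)[X]) * two_eq_zero

lemma g2_eval (r : ZMod 2) : g2.eval r ≠ 0 := by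
  unfold g2
  simp only [eval_add, eval_pow, eval_X, eval_one]
  revert r; decide

lemma quad_not_dvd : ¬ ((X^2+X+1 : (ZMod 2)[X]) ∣ g2) := by
  intro h
  rw [g2_div] at h
  have h2 : (X^2+X+1 : (ZMod 2)[X]) ∣ (X+1) := (dvd_add_right ⟨X^3+X^2+X, rfl⟩).mp h
  have := Polynomial.eq_zero_of_dvd_of_degree_lt h2 (by
    have h1 : (X+1 : (ZMod 2)[X]).degree = 1 := by compute_degree!
    have h2 : (X^2+X+1 : (ZMod 2)[X]).degree = 2 := by compute_degree!
    rw [h1, h2]; norm_num)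
  have : (X+1 : (ZMod 2)[X]).coeff 0 = 0 := by rw [this]; simp
  simp at this

lemma eval_zero_of_dvd {a : (ZMod 2)[X]} (h : a ∣ g2) {r : ZMod 2} (hr : a.eval r = 0) : False := by
  obtain ⟨b, hb⟩ := h
  exact g2_eval r (by rw [hb, eval_mul, hr, zero_mul])

lemma aux_factor (a : (ZMod 2)[X]) (ha : a ∣ g2) (h1 : 1 ≤ a.natDegree) (h2 : a.natDegree ≤ 2) :
    False := by
  have hZ : ∀ x : ZMod 2, x = 0 ∨ x = 1 := by decide
  have ha0 : a ≠ 0 := by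
    rintro rfl
    exact g2_monic.ne_zero (zero_dvd_iff.mp ha)
  have hlead : a.coeff a.natDegree ≠ 0 := leadingCoeff_ne_zero.mpr ha0
  interval_cases h : a.natDegree
  · -- degree 1
    have hrep : a = C (a.coeff 1) * X + C (a.coeff 0) :=
      eq_X_add_C_of_natDegree_le_one (by omega)
    have hc1' : a.coeff 1 = 1 := (hZ _).resolve_left hlead
    refine eval_zero_of_dvd ha (r := a.coeff 0) ?_
    rw [hrep, hc1']
    simp [CharTwo.add_self_eq_zero]
  · -- degree 2
    have hrep : a = C (a.coeff 0) * X ^ 0 + C (a.coeff 1) * X ^ 1 + C (a.coeff 2) * X ^ 2 := by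
      have := a.as_sum_range' 3 (by omega)
      rw [Finset.sum_range_succ, Finset.sum_range_succ, Finset.sum_range_one] at this
      simp only [C_mul_X_pow_eq_monomial]
      exact this
    have hc2 : a.coeff 2 = 1 := (hZ _).resolve_left hlead
    rcases hZ (a.coeff 0) with h0 | h0
    · refine eval_zero_of_dvd ha (r := 0) ?_
      rw [hrep, h0]; simp
    rcases hZ (a.coeff 1) with hc1 | hc1
    · refine eval_zero_of_dvd ha (r := 1) ?_
      rw [hrep, h0, hc1, hc2]; simp; decide
    · refine quad_not_dvd ?_
      have : a = X^2 + X + 1 := by rw [hrep, h0, hc1, hc2, map_one]; ring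
      rwa [this] at ha

lemma natdeg_pos_of_nonunit {a : (ZMod 2)[X]} (ha0 : a ≠ 0) (hna : ¬ IsUnit a) :
    1 ≤ a.natDegree := by
  rcases Nat.eq_zero_or_pos a.natDegree with h | h
  · exfalso
    apply hna
    rw [Polynomial.eq_C_of_natDegree_eq_zero h]
    exact isUnit_C.mpr (isUnit_iff_ne_zero.mpr (fun hc => ha0 (by
      rw [Polynomial.eq_C_of_natDegree_eq_zero h, hc, map_zero])))
  · exact h

lemma g2_irred : Irreducible g2 := by
  constructor
  · intro hu
    have := natDegree_eq_zero_of_isUnit hu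
    rw [g2_natDegree] at this; omega
  · intro a b hab
    by_contra hcon
    push_neg at hcon
    obtain ⟨hna, hnb⟩ := hcon
    have hg0 : g2 ≠ 0 := g2_monic.ne_zero
    have ha0 : a ≠ 0 := by rintro rfl; rw [hab] at hg0; simp at hg0
    have hb0 : b ≠ 0 := by rintro rfl; rw [hab] at hg0; simp at hg0
    have hda := natdeg_pos_of_nonunit ha0 hna
    have hdb := natdeg_pos_of_nonunit hb0 hnb
    have hsum : a.natDegree + b.natDegree = 5 := by
      rw [← Polynomial.natDegree_mul ha0 hb0, ← hab, g2_natDegree]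
    rcases (by omega : a.natDegree ≤ 2 ∨ b.natDegree ≤ 2) with h | h
    · exact aux_factor a ⟨b, hab⟩ hda h
    · exact aux_factor b ⟨a, by rw [hab, mul_comm]⟩ hdb h

noncomputable def qZ : ℤ[X] := X^5 - X^3 + 2*X^2 - 2*X + 1

lemma qZ_monic : qZ.Monic := by unfold qZ; monicity!

lemma qZ_map_g2 : qZ.map (Int.castRingHom (ZMod 2)) = g2 := by
  unfold qZ g2
  simp only [Polynomial.map_add, Polynomial.map_sub, Polynomial.map_mul, Polynomial.map_pow,
    Polynomial.map_X, Polynomial.map_one, Polynomial.map_ofNat]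
  linear_combination (-X^3 + X^2 - X : (ZMod 2)[X]) * two_eq_zero

lemma qZ_irred : Irreducible qZ :=
  Polynomial.Monic.irreducible_of_irreducible_map (Int.castRingHom (ZMod 2)) qZ qZ_monic
    (by rw [qZ_map_g2]; exact g2_irred)

lemma qQ_irred : Irreducible (qZ.map (algebraMap ℤ ℚ)) :=
  (qZ_monic.irreducible_iff_irreducible_map_fraction_map (K := ℚ)).mp qZ_irred

abbrev R2 : Type := MvPolynomial (Fin 2) ℚ

open MvPolynomial in
noncomputable def p₀ : R2[X] :=
  Polynomial.X ^ 5 - Polynomial.C (X 0) * Polynomial.X ^ 4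
    + Polynomial.C ((X 1) ^ 3 + 2 * (X 0) * (X 1) - (X 1) ^ 2 - (X 1)) * Polynomial.X ^ 3
    - Polynomial.C ((X 1) ^ 3 + (X 0) * (X 1) ^ 2 - 3 * (X 1) ^ 2) * Polynomial.X ^ 2
    + Polynomial.C ((X 1) ^ 4 - 3 * (X 1) ^ 3) * Polynomial.X
    + Polynomial.C ((X 1) ^ 4)

lemma p₀_monic : p₀.Monic := by unfold p₀; monicity!

noncomputable def φ : R2 →+* ℚ := MvPolynomial.eval ![0, 1]

lemma p₀_map_q : p₀.map φ = qZ.map (algebraMap ℤ ℚ) := by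
  unfold p₀ qZ φ
  simp only [Polynomial.map_add, Polynomial.map_sub, Polynomial.map_mul, Polynomial.map_pow,
    Polynomial.map_X, Polynomial.map_one, Polynomial.map_ofNat, Polynomial.map_C,
    map_add, map_sub, map_mul, map_pow, map_ofNat, MvPolynomial.eval_X,
    Matrix.cons_val_zero, Matrix.cons_val_one, Matrix.head_cons, Polynomial.C_1,
    Polynomial.C_0, map_one, map_zero]

  ring

lemma p₀_irred : Irreducible p₀ :=
  Polynomial.Monic.irreducible_of_irreducible_map φ p₀ p₀_monic
    (by rw [p₀_map_q]; exact qQ_irred)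

set_option maxHeartbeats 1000000 in
set_option synthInstance.maxHeartbeats 200000 in
lemma P₅_eq : P₅ = p₀.map (algebraMap R2 K) := by
  unfold P₅ p₀ n c
  simp only [Polynomial.map_add, Polynomial.map_sub, Polynomial.map_mul, Polynomial.map_pow,
    Polynomial.map_X, Polynomial.map_one, Polynomial.map_ofNat, Polynomial.map_C,
    map_add, map_sub, map_mul, map_pow, map_ofNat]

/-- the polynomial `P_{n,c,5}` is irreducible over `ℚ(n,c)`. -/
theorem stmt_13 : Irreducible P₅ := by
  rw [P₅_eq]
  exact (p₀_monic.irreducible_iff_irreducible_map_fraction_map (K := K)).mp p₀_irred
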